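/- arXiv:1203.4640 — 6 statements merged into one kernel-verified Lean document; each statement's English description precedes it below -/
import Mathlib

section
/- Let Q be a nonnegative n×n real matrix. Then Q is transient if and only if there exists a vector f ≫ 0 in ℝ^n such that the equation (I − Q)x = f has a solution x ≫ 0. -/
open Matrix Filter

/-- A square real matrix is *transient* if every entry of `Q ^ t` tends to `0` as `t → ∞`. -/
def Matrix.Transient {n : ℕ} (Q : Matrix (Fin n) (Fin n) ℝ) : Prop :=
  ∀ i j, Tendsto (fun t : ℕ => (Q ^ t) i j) atTop (nhds 0)

private lemma pow_entry_nonneg {n : ℕ} (Q : Matrix (Fin n) (Fin n) ℝ)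
    (hQ : ∀ i j, 0 ≤ Q i j) : ∀ t i j, 0 ≤ (Q ^ t) i j := by
  intro t
  induction t with
  | zero => intro i j; simp [Matrix.one_apply]; positivity
  | succ t ih =>
    intro i j
    rw [pow_succ, Matrix.mul_apply]
    exact Finset.sum_nonneg fun k _ => mul_nonneg (ih i k) (hQ k j)

private lemma mulVec_entry_nonneg {n : ℕ} (A : Matrix (Fin n) (Fin n) ℝ)
    (hA : ∀ i j, 0 ≤ A i j) (v : Fin n → ℝ) (hv : ∀ j, 0 ≤ v j) :
    ∀ i, 0 ≤ (A *ᵥ v) i := by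
  intro i
  rw [Matrix.mulVec, dotProduct]
  exact Finset.sum_nonneg fun j _ => mul_nonneg (hA i j) (hv j)

/-- The backward direction: a strictly positive solution forces transience. -/
private lemma backward {n : ℕ} (Q : Matrix (Fin n) (Fin n) ℝ)
    (hQ : ∀ i j, 0 ≤ Q i j) (f x : Fin n → ℝ) (hf : ∀ j, 0 < f j)
    (hx : ∀ j, 0 < x j) (hsol : (1 - Q) *ᵥ x = f) :
    Q.Transient := by
  have hxQ : Q *ᵥ x = x - f := by
    have h : x - Q *ᵥ x = f := by
      rw [← hsol, Matrix.sub_mulVec, Matrix.one_mulVec]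
    rw [← h]; abel
  -- Q^t x = Q^(t+1) x + Q^t f
  have key : ∀ t : ℕ, Q ^ t *ᵥ x = Q ^ (t+1) *ᵥ x + Q ^ t *ᵥ f := by
    intro t
    have : Q ^ t *ᵥ (Q *ᵥ x) = Q ^ (t+1) *ᵥ x := by
      rw [Matrix.mulVec_mulVec, ← pow_succ]
    rw [← this, hxQ, Matrix.mulVec_sub]
    abel
  -- partialSum sums of Q^t f bounded by x
  have partialSum : ∀ T : ℕ, (∑ t ∈ Finset.range T, Q ^ t *ᵥ f) = x - Q ^ T *ᵥ x := by
    intro T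
    induction T with
    | zero => simp
    | succ T ih =>
      rw [Finset.sum_range_succ, ih, key T]
      abel
  have hbound : ∀ i, ∀ T : ℕ, (∑ t ∈ Finset.range T, (Q ^ t *ᵥ f) i) ≤ x i := by
    intro i T
    have h1 : (∑ t ∈ Finset.range T, Q ^ t *ᵥ f) i = x i - (Q ^ T *ᵥ x) i := by
      rw [partialSum T]; simp
    have h2 : (∑ t ∈ Finset.range T, Q ^ t *ᵥ f) i
        = ∑ t ∈ Finset.range T, (Q ^ t *ᵥ f) i := by
      simp [Finset.sum_apply]
    have h3 : 0 ≤ (Q ^ T *ᵥ x) i :=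
      mulVec_entry_nonneg _ (pow_entry_nonneg Q hQ T) x (fun j => (hx j).le) i
    rw [← h2, h1]; linarith
  -- Thus (Q^t f) i → 0 for each i
  have hto0 : ∀ i, Tendsto (fun t : ℕ => (Q ^ t *ᵥ f) i) atTop (nhds 0) := by
    intro i
    have hsum : Summable (fun t : ℕ => (Q ^ t *ᵥ f) i) :=
      summable_of_sum_range_le
        (fun t => mulVec_entry_nonneg _ (pow_entry_nonneg Q hQ t) f (fun j => (hf j).le) i)
        (fun T => hbound i T)
    exact hsum.tendsto_atTop_zero
  -- squeeze
  intro i j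
  have hle : ∀ t : ℕ, (Q ^ t) i j ≤ (Q ^ t *ᵥ f) i / f j := by
    intro t
    rw [le_div_iff₀ (hf j)]
    have : (Q ^ t) i j * f j ≤ ∑ k, (Q ^ t) i k * f k := by
      exact Finset.single_le_sum
        (fun k _ => mul_nonneg (pow_entry_nonneg Q hQ t i k) (hf k).le)
        (Finset.mem_univ j)
    simpa [Matrix.mulVec, dotProduct] using this
  have hge : ∀ t : ℕ, (0:ℝ) ≤ (Q ^ t) i j := fun t => pow_entry_nonneg Q hQ t i j
  have hlim : Tendsto (fun t : ℕ => (Q ^ t *ᵥ f) i / f j) atTop (nhds 0) := by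
    simpa using (hto0 i).div_const (f j)
  exact squeeze_zero hge hle hlim


private lemma forward {n : ℕ} (Q : Matrix (Fin n) (Fin n) ℝ)
    (hQ : ∀ i j, 0 ≤ Q i j) (hT : Q.Transient) :
    ∃ f : Fin n → ℝ, (∀ j, 0 < f j) ∧
      ∃ x : Fin n → ℝ, (∀ j, 0 < x j) ∧ (1 - Q) *ᵥ x = f := by
  rcases Nat.eq_zero_or_pos n with hn | hn
  · subst hn
    exact ⟨0, fun j => j.elim0, 0, fun j => j.elim0, funext fun j => j.elim0⟩
  set v : Fin n → ℝ := fun _ => (1:ℝ) with hv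
  set g : ℕ → Fin n → ℝ := fun T => ∑ t ∈ Finset.range T, Q ^ t *ᵥ v with hgdef
  have hgnn : ∀ T j, 0 ≤ g T j := by
    intro T j
    rw [hgdef]
    simp only [Finset.sum_apply]
    exact Finset.sum_nonneg fun t _ =>
      mulVec_entry_nonneg _ (pow_entry_nonneg Q hQ t) v (fun _ => zero_le_one) j
  have hgmono : ∀ i, Monotone fun T => g T i := by
    intro i
    apply monotone_nat_of_le_succ
    intro T
    rw [hgdef]
    simp only [Finset.sum_apply, Finset.sum_range_succ]
    have := mulVec_entry_nonneg _ (pow_entry_nonneg Q hQ T) v (fun _ => zero_le_one) i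
    linarith
  have hgadd : ∀ a b, g (a + b) = g a + Q ^ a *ᵥ g b := by
    intro a b
    induction b with
    | zero => simp [hgdef]
    | succ b ih =>
      have h1 : a + (b + 1) = (a + b) + 1 := by ring
      have e1 : g ((a + b) + 1) = g (a + b) + Q ^ (a + b) *ᵥ v := by
        simp only [hgdef, Finset.sum_range_succ]
      have e2 : g (b + 1) = g b + Q ^ b *ᵥ v := by
        simp only [hgdef, Finset.sum_range_succ]
      rw [h1, e1, ih, e2, Matrix.mulVec_add, Matrix.mulVec_mulVec, ← pow_add]
      abel
  have hg1 : g 1 = v := by rw [hgdef]; simp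
  have hrec : ∀ T, g (T + 1) = v + Q *ᵥ g T := by
    intro T
    have := hgadd 1 T
    rw [add_comm 1 T] at this
    rw [this, hg1, pow_one]
  -- uniform smallness of some power
  set ε : ℝ := 1 / (2 * n) with hεdef
  have hε : 0 < ε := by positivity
  have hev : ∀ᶠ t in atTop, ∀ i j, (Q ^ t) i j < ε := by
    rw [eventually_all]
    intro i
    rw [eventually_all]
    intro j
    exact (hT i j).eventually_lt_const hε
  obtain ⟨N, hN⟩ := eventually_atTop.mp hev
  set t0 : ℕ := max N 1 with ht0def
  have ht0 : 1 ≤ t0 := le_max_right N 1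
  have hQt0 : ∀ i j, (Q ^ t0) i j < ε := hN t0 (le_max_left N 1)
  set u : Fin n → ℝ := g t0 with hudef
  set M : ℝ := ∑ j, u j with hMdef
  have hunn : ∀ j, 0 ≤ u j := hgnn t0
  have huM : ∀ j, u j ≤ M :=
    fun j => Finset.single_le_sum (fun k _ => hunn k) (Finset.mem_univ j)
  have hM0 : 0 ≤ M := Finset.sum_nonneg fun j _ => hunn j
  have hhalve : ∀ k j, (Q ^ (k * t0) *ᵥ u) j ≤ M / 2 ^ k := by
    intro k
    induction k with
    | zero => intro j; simpa using huM j
    | succ k ih =>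
      intro j
      have h1 : (k + 1) * t0 = t0 + k * t0 := by ring
      rw [h1, pow_add, ← Matrix.mulVec_mulVec]
      have hnn : ∀ l, 0 ≤ (Q ^ (k * t0) *ᵥ u) l :=
        mulVec_entry_nonneg _ (pow_entry_nonneg Q hQ _) u hunn
      have step : ∀ l, (Q ^ t0) j l * (Q ^ (k * t0) *ᵥ u) l ≤ ε * (M / 2 ^ k) := by
        intro l
        exact mul_le_mul (hQt0 j l).le (ih l) (hnn l) hε.le
      have hsum : (Q ^ t0 *ᵥ (Q ^ (k * t0) *ᵥ u)) j
          ≤ ∑ _l : Fin n, ε * (M / 2 ^ k) := by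
        rw [Matrix.mulVec, dotProduct]
        exact Finset.sum_le_sum fun l _ => step l
      refine hsum.trans ?_
      rw [Finset.sum_const, Finset.card_univ, Fintype.card_fin, nsmul_eq_mul, hεdef]
      have hn' : (0:ℝ) < n := by exact_mod_cast hn
      have : (n:ℝ) * (1 / (2 * n) * (M / 2 ^ k)) = M / 2 ^ (k + 1) := by
        rw [pow_succ]
        field_simp
      rw [this]
  have hblock : ∀ K, g (K * t0) = ∑ k ∈ Finset.range K, Q ^ (k * t0) *ᵥ u := by
    intro K
    induction K with
    | zero => simp [hgdef]
    | succ K ih =>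
      have h1 : (K + 1) * t0 = K * t0 + t0 := by ring
      rw [h1, hgadd, ih, Finset.sum_range_succ, hudef]
  have hbd : ∀ T j, g T j ≤ 2 * M := by
    intro T j
    have hTle : T ≤ T * t0 := Nat.le_mul_of_pos_right T (lt_of_lt_of_le one_pos ht0)
    have h1 : g T j ≤ g (T * t0) j := hgmono j hTle
    have h2 : g (T * t0) j = ∑ k ∈ Finset.range T, (Q ^ (k * t0) *ᵥ u) j := by
      rw [hblock]; simp
    have h3 : (∑ k ∈ Finset.range T, (Q ^ (k * t0) *ᵥ u) j)
        ≤ ∑ k ∈ Finset.range T, M / 2 ^ k :=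
      Finset.sum_le_sum fun k _ => hhalve k j
    have h4 : (∑ k ∈ Finset.range T, M / 2 ^ k) ≤ 2 * M := by
      have : (∑ k ∈ Finset.range T, M / 2 ^ k)
          = M * ∑ k ∈ Finset.range T, (1 / 2 : ℝ) ^ k := by
        rw [Finset.mul_sum]
        congr 1
        funext k
        rw [div_pow, one_pow]
        ring
      rw [this, mul_comm]
      exact mul_le_mul_of_nonneg_right (sum_geometric_two_le T) hM0
    rw [h2] at h1
    linarith
  -- define the solution x as the coordinatewise supremum
  set x : Fin n → ℝ := fun i => ⨆ T, g T i with hxdef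
  have hbdd : ∀ i, BddAbove (Set.range fun T => g T i) := by
    intro i
    refine ⟨2 * M, ?_⟩
    rintro _ ⟨T, rfl⟩
    exact hbd T i
  have hxlim : ∀ i, Tendsto (fun T => g T i) atTop (nhds (x i)) :=
    fun i => tendsto_atTop_ciSup (hgmono i) (hbdd i)
  have hxge : ∀ i, (1:ℝ) ≤ x i := by
    intro i
    have h1 : g 1 i ≤ x i := le_ciSup (hbdd i) 1
    have h2 : g 1 i = 1 := by rw [hg1]
    linarith
  have heq : ∀ i, x i = 1 + (Q *ᵥ x) i := by
    intro i
    have l1 : Tendsto (fun T => g (T + 1) i) atTop (nhds (x i)) :=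
      (hxlim i).comp (tendsto_add_atTop_nat 1)
    have l2 : Tendsto (fun T => 1 + (Q *ᵥ g T) i) atTop (nhds (1 + (Q *ᵥ x) i)) := by
      have hmv : ∀ (w : Fin n → ℝ), (Q *ᵥ w) i = ∑ j, Q i j * w j := by
        intro w; rw [Matrix.mulVec, dotProduct]
      have : Tendsto (fun T => ∑ j, Q i j * g T j) atTop (nhds (∑ j, Q i j * x j)) :=
        tendsto_finset_sum _ fun j _ => (hxlim j).const_mul (Q i j)
      simp only [hmv]
      exact tendsto_const_nhds.add this
    have l3 : (fun T => g (T + 1) i) = fun T => 1 + (Q *ᵥ g T) i := by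
      funext T
      rw [hrec T]
      simp [hv]
    rw [l3] at l1
    exact tendsto_nhds_unique l1 l2
  refine ⟨v, fun j => one_pos, x, fun j => lt_of_lt_of_le one_pos (hxge j), ?_⟩
  rw [Matrix.sub_mulVec, Matrix.one_mulVec]
  funext i
  have := heq i
  simp only [Pi.sub_apply, hv]
  linarith

/-- a nonnegative square matrix `Q` is transient iff there is a strictly positive
vector `f` such that `(I - Q) x = f` has a strictly positive solution `x`. -/
theorem transient_iff_exists_pos_solution {n : ℕ} (Q : Matrix (Fin n) (Fin n) ℝ)
    (hQ : ∀ i j, 0 ≤ Q i j) :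
    Q.Transient ↔
      ∃ f : Fin n → ℝ, (∀ j, 0 < f j) ∧
        ∃ x : Fin n → ℝ, (∀ j, 0 < x j) ∧ (1 - Q) *ᵥ x = f := by
  constructor
  · intro hT
    exact forward Q hQ hT
  · rintro ⟨f, hf, x, hx, hsol⟩
    exact backward Q hQ f x hf hx hsol
end

section
/- Let q be a nonnegative transient n×n real matrix and let i be an index (so that q(i,i) < 1), and let q̄ be the matrix obtained from q by the pivot at i. Then q̄ is nonnegative and transient. -/
open Matrix Filter

/-- The matrix produced by the pivot at index `i`:
`q̄(i,p) = q(i,p)/(1 − q(i,i))` for `p ≠ i`;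
`q̄(j,p) = q(j,p) + q(j,i)·q̄(i,p)` for `j ≠ i`, `p ≠ i`;
`q̄(j,i) = 0` for every `j`. -/
noncomputable def pivotQ {n : ℕ} (q : Matrix (Fin n) (Fin n) ℝ) (i : Fin n) :
    Matrix (Fin n) (Fin n) ℝ := fun j p =>
  if p = i then 0
  else if j = i then q i p / (1 - q i i)
  else q j p + q j i * (q i p / (1 - q i i))

/-- Entries of powers of an entrywise-nonnegative matrix are nonnegative. -/
lemma powEntryNonneg {n : ℕ} (q : Matrix (Fin n) (Fin n) ℝ)
    (hnn : ∀ j p, 0 ≤ q j p) : ∀ t j p, 0 ≤ (q ^ t) j p := by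
  intro t
  induction t with
  | zero =>
    intro j p
    rw [pow_zero, Matrix.one_apply]
    split_ifs <;> norm_num
  | succ t ih =>
    intro j p
    rw [pow_succ, Matrix.mul_apply]
    exact Finset.sum_nonneg fun k _ => mul_nonneg (ih j k) (hnn k p)

/-- Entries of powers of a nonnegative transient matrix are summable. -/
lemma summablePowEntry {n : ℕ} (q : Matrix (Fin n) (Fin n) ℝ)
    (hnn : ∀ j p, 0 ≤ q j p) (htr : q.Transient) (j p : Fin n) :
    Summable fun t => (q ^ t) j p := by
  set S : ℕ → ℝ := fun t => ∑ a, ∑ b, (q ^ t) a b with hSdef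
  have hS0 : ∀ t, 0 ≤ S t := fun t =>
    Finset.sum_nonneg fun a _ => Finset.sum_nonneg fun b _ => powEntryNonneg q hnn t a b
  have hentry : ∀ t (a b : Fin n), (q ^ t) a b ≤ S t := by
    intro t a b
    calc (q ^ t) a b ≤ ∑ b', (q ^ t) a b' :=
          Finset.single_le_sum (fun b' _ => powEntryNonneg q hnn t a b') (Finset.mem_univ b)
      _ ≤ S t :=
          Finset.single_le_sum
            (fun a' _ => Finset.sum_nonneg fun b' _ => powEntryNonneg q hnn t a' b')
            (Finset.mem_univ a)
  have hStend : Tendsto S atTop (nhds 0) := by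
    have h : Tendsto (fun t => ∑ a : Fin n, ∑ b : Fin n, (q ^ t) a b) atTop
        (nhds (∑ _a : Fin n, ∑ _b : Fin n, (0 : ℝ))) :=
      tendsto_finset_sum _ fun a _ => tendsto_finset_sum _ fun b _ => htr a b
    simpa using h
  obtain ⟨m, hm⟩ := ((hStend.eventually (gt_mem_nhds (by norm_num : (0:ℝ) < 1/2))).and
      (eventually_ge_atTop 1)).exists
  obtain ⟨hmhalf, hm1⟩ := hm
  have hsub : ∀ s t, S (s + t) ≤ S s * S t := by
    intro s t
    have h1 : S (s + t) = ∑ a, ∑ k, (q ^ s) a k * (∑ b, (q ^ t) k b) := by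
      rw [hSdef]
      simp only [pow_add, Matrix.mul_apply]
      refine Finset.sum_congr rfl fun a _ => ?_
      rw [Finset.sum_comm]
      simp [Finset.mul_sum]
    rw [h1]
    calc ∑ a, ∑ k, (q ^ s) a k * (∑ b, (q ^ t) k b)
        ≤ ∑ a, ∑ k, (q ^ s) a k * S t := by
          refine Finset.sum_le_sum fun a _ => Finset.sum_le_sum fun k _ => ?_
          refine mul_le_mul_of_nonneg_left ?_ (powEntryNonneg q hnn s a k)
          exact Finset.single_le_sum
            (fun a' _ => Finset.sum_nonneg fun b' _ => powEntryNonneg q hnn t a' b')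
            (Finset.mem_univ k)
      _ = S s * S t := by rw [hSdef]; simp [Finset.sum_mul]
  have hkey : ∀ k r, S (m * k + r) ≤ (1/2) ^ k * S r := by
    intro k
    induction k with
    | zero => intro r; simpa using le_refl (S r)
    | succ k ih =>
      intro r
      have h1 : m * (k + 1) + r = m + (m * k + r) := by ring
      rw [h1]
      calc S (m + (m * k + r)) ≤ S m * S (m * k + r) := hsub m _
        _ ≤ (1/2) * ((1/2) ^ k * S r) := by
            have := ih r
            have h2 := hS0 (m * k + r)
            nlinarith [hS0 r]
        _ = (1/2) ^ (k+1) * S r := by ring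
  have hbound : ∀ T, ∑ t ∈ Finset.range T, S t ≤ 2 * ∑ r ∈ Finset.range m, S r := by
    have hblock : ∀ K, ∑ t ∈ Finset.range (m * K), S t
        ≤ (∑ k ∈ Finset.range K, (1/2 : ℝ) ^ k) * ∑ r ∈ Finset.range m, S r := by
      intro K
      induction K with
      | zero => simp
      | succ K ih =>
        have h1 : m * (K + 1) = m * K + m := by ring
        rw [h1, Finset.sum_range_add, Finset.sum_range_succ, add_mul]
        refine add_le_add ih ?_
        calc ∑ r ∈ Finset.range m, S (m * K + r)
            ≤ ∑ r ∈ Finset.range m, (1/2 : ℝ) ^ K * S r :=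
              Finset.sum_le_sum fun r _ => hkey K r
          _ = (1/2 : ℝ) ^ K * ∑ r ∈ Finset.range m, S r := by rw [Finset.mul_sum]
    intro T
    have hsubset : Finset.range T ⊆ Finset.range (m * T) :=
      Finset.range_subset_range.2 (Nat.le_mul_of_pos_left T (by omega))
    calc ∑ t ∈ Finset.range T, S t ≤ ∑ t ∈ Finset.range (m * T), S t :=
          Finset.sum_le_sum_of_subset_of_nonneg hsubset fun t _ _ => hS0 t
      _ ≤ (∑ k ∈ Finset.range T, (1/2 : ℝ) ^ k) * ∑ r ∈ Finset.range m, S r := hblock T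
      _ ≤ 2 * ∑ r ∈ Finset.range m, S r := by
          refine mul_le_mul_of_nonneg_right (sum_geometric_two_le T)
            (Finset.sum_nonneg fun r _ => hS0 r)
  have hSsum : Summable S := summable_of_sum_range_le hS0 hbound
  exact hSsum.of_nonneg_of_le (fun t => powEntryNonneg q hnn t j p) (fun t => hentry t j p)

/-- the pivot at `i` of a nonnegative transient matrix is nonnegative and
transient. -/
theorem pivot_nonneg_transient {n : ℕ} (q : Matrix (Fin n) (Fin n) ℝ) (i : Fin n)
    (hnn : ∀ j p, 0 ≤ q j p) (htr : q.Transient) :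
    (∀ j p, 0 ≤ pivotQ q i j p) ∧ (pivotQ q i).Transient := by
  have hd : q i i < 1 := by
    by_contra h
    push_neg at h
    have hpow : ∀ t, 1 ≤ (q ^ t) i i := by
      intro t
      induction t with
      | zero => simp
      | succ t ih =>
        rw [pow_succ, Matrix.mul_apply]
        calc (1:ℝ) ≤ (q ^ t) i i * q i i := by nlinarith
          _ ≤ ∑ k, (q ^ t) i k * q k i :=
            Finset.single_le_sum
              (fun k _ => mul_nonneg (powEntryNonneg q hnn t i k) (hnn k i))
              (Finset.mem_univ i)
    have h0 : (1:ℝ) ≤ 0 := ge_of_tendsto (htr i i) (Eventually.of_forall hpow)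
    linarith
  have hu : 0 < 1 - q i i := by linarith
  have hpnn : ∀ j p, 0 ≤ pivotQ q i j p := by
    intro j p
    unfold pivotQ
    split_ifs with h1 h2
    · exact le_refl 0
    · exact div_nonneg (hnn i p) hu.le
    · exact add_nonneg (hnn j p) (mul_nonneg (hnn j i) (div_nonneg (hnn i p) hu.le))
  refine ⟨hpnn, ?_⟩
  have hsum := summablePowEntry q hnn htr
  set N : Matrix (Fin n) (Fin n) ℝ := fun j p => ∑' t, (q ^ t) j p with hNdef
  have hNnn : ∀ j p, 0 ≤ N j p := fun j p =>
    tsum_nonneg fun t => powEntryNonneg q hnn t j p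
  have hNeq : ∀ j p, N j p = (if j = p then (1:ℝ) else 0) + ∑ k, q j k * N k p := by
    intro j p
    have h1 : N j p = (q ^ 0) j p + ∑' t, (q ^ (t + 1)) j p := Summable.tsum_eq_zero_add (hsum j p)
    rw [h1, pow_zero, Matrix.one_apply]
    congr 1
    have h2 : (fun t : ℕ => (q ^ (t + 1)) j p) = fun t => ∑ k, q j k * (q ^ t) k p := by
      funext t
      rw [pow_succ', Matrix.mul_apply]
    rw [h2, Summable.tsum_finsetSum fun k _ => ((hsum k p).mul_left (q j k))]
    exact Finset.sum_congr rfl fun k _ => tsum_mul_left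
  -- the fundamental matrix of the pivot
  set Nb : Matrix (Fin n) (Fin n) ℝ := fun x p =>
    if p = i then (if x = i then (1:ℝ) else 0) else N x p with hNbdef
  have hNbnn : ∀ x p, 0 ≤ Nb x p := by
    intro x p
    rw [hNbdef]
    dsimp only
    split_ifs
    · norm_num
    · norm_num
    · exact hNnn x p
  have hrow : ∀ p, p ≠ i →
      ∑ k ∈ Finset.univ.erase i, q i k * N k p = (1 - q i i) * N i p := by
    intro p hp
    have h := hNeq i p
    rw [if_neg (fun h' => hp h'.symm)] at h
    rw [← Finset.add_sum_erase _ _ (Finset.mem_univ i)] at h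
    linarith [h]
  have hNbEq : Nb = 1 + pivotQ q i * Nb := by
    ext x p
    rw [Matrix.add_apply, Matrix.mul_apply, Matrix.one_apply]
    by_cases hp : p = i
    · rw [hp]
      have hsum0 : ∑ k, pivotQ q i x k * Nb k i = 0 := by
        refine Finset.sum_eq_zero fun k _ => ?_
        rcases eq_or_ne k i with hk | hk
        · rw [hk]
          simp [pivotQ]
        · have hz : Nb k i = 0 := by rw [hNbdef]; simp [hk]
          rw [hz, mul_zero]
      rw [hsum0, add_zero, hNbdef]
      simp
    · have hNb1 : ∀ k, Nb k p = N k p := by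
        intro k; rw [hNbdef]; simp [hp]
      have hNbx : Nb x p = N x p := hNb1 x
      rw [hNbx]
      simp only [hNb1]
      rw [← Finset.add_sum_erase _ (fun k => pivotQ q i x k * N k p) (Finset.mem_univ i)]
      have hzero : pivotQ q i x i * N i p = 0 := by simp [pivotQ]
      rw [hzero, zero_add]
      by_cases hx : x = i
      · rw [hx]
        have h1 : ∑ k ∈ Finset.univ.erase i, pivotQ q i i k * N k p
            = (1 / (1 - q i i)) * ∑ k ∈ Finset.univ.erase i, q i k * N k p := by
          rw [Finset.mul_sum]
          refine Finset.sum_congr rfl fun k hk => ?_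
          have hk' : k ≠ i := Finset.ne_of_mem_erase hk
          simp only [pivotQ, if_neg hk', if_pos rfl, if_true]
          ring
        rw [h1, hrow p hp]
        have h2 : (1 / (1 - q i i)) * ((1 - q i i) * N i p) = N i p := by
          field_simp
        rw [h2, if_neg (fun h' => hp h'.symm), zero_add]
      · have h1 : ∑ k ∈ Finset.univ.erase i, pivotQ q i x k * N k p
            = (∑ k ∈ Finset.univ.erase i, q x k * N k p)
              + (q x i / (1 - q i i)) * ∑ k ∈ Finset.univ.erase i, q i k * N k p := by
          rw [Finset.mul_sum, ← Finset.sum_add_distrib]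
          refine Finset.sum_congr rfl fun k hk => ?_
          have hk' : k ≠ i := Finset.ne_of_mem_erase hk
          simp only [pivotQ, if_neg hk', if_neg hx]
          ring
        rw [h1, hrow p hp]
        have h2 : q x i / (1 - q i i) * ((1 - q i i) * N i p) = q x i * N i p := by
          field_simp
        rw [h2]
        have h3 := hNeq x p
        rw [← Finset.add_sum_erase _ (fun k => q x k * N k p) (Finset.mem_univ i)] at h3
        linarith [h3]
  have hpownn : ∀ t x p, 0 ≤ (pivotQ q i ^ t) x p := powEntryNonneg _ hpnn
  have hiter : ∀ t, Nb = (∑ s ∈ Finset.range t, pivotQ q i ^ s) + pivotQ q i ^ t * Nb := by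
    intro t
    induction t with
    | zero => simp
    | succ t ih =>
      rw [Finset.sum_range_succ]
      calc Nb = (∑ s ∈ Finset.range t, pivotQ q i ^ s) + pivotQ q i ^ t * Nb := ih
        _ = (∑ s ∈ Finset.range t, pivotQ q i ^ s) + pivotQ q i ^ t * (1 + pivotQ q i * Nb) := by
            rw [← hNbEq]
        _ = (∑ s ∈ Finset.range t, pivotQ q i ^ s + pivotQ q i ^ t)
            + pivotQ q i ^ (t + 1) * Nb := by
            rw [mul_add, mul_one, pow_succ, mul_assoc]
            abel
  intro x p
  have hsummable : Summable fun t => (pivotQ q i ^ t) x p := by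
    refine summable_of_sum_range_le (c := Nb x p) (fun t => hpownn t x p) (fun T => ?_)
    have h := congrFun (congrFun (hiter T) x) p
    rw [Matrix.add_apply, Matrix.sum_apply] at h
    have h2 : 0 ≤ (pivotQ q i ^ T * Nb) x p := by
      rw [Matrix.mul_apply]
      exact Finset.sum_nonneg fun k _ => mul_nonneg (hpownn T x k) (hNbnn k p)
    linarith [h]
  exact hsummable.tendsto_atTop_zero
end

section
/- Let q be a nonnegative n×n real matrix with q(i,i) < 1 for an index i, let r ∈ ℝ^n, and let (q̄, r̄) be obtained from (q, r) by the pivot at i. Then: (1) if q is substochastic, so is q̄; (2) if r(j) ≤ 0 for all j, then r̄(j) ≤ 0 for all j; and (3) if r(j) ≥ 0 for all j, then r̄(j) ≥ 0 for all j. -/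
open Matrix

/-- The reward vector produced by the pivot at index `i`:
`r̄(i) = r(i)/(1 − q(i,i))` and `r̄(j) = r(j) + q(j,i)·r̄(i)` for `j ≠ i`. -/
noncomputable def pivotR {n : ℕ} (q : Matrix (Fin n) (Fin n) ℝ) (r : Fin n → ℝ)
    (i : Fin n) : Fin n → ℝ := fun j =>
  if j = i then r i / (1 - q i i) else r j + q j i * (r i / (1 - q i i))

/-- for a nonnegative matrix `q` with `q i i < 1`, the pivot at `i` preserves
substochasticity, nonpositivity of the rewards, and nonnegativity of the rewards. -/
theorem pivot_preserves_hypotheses {n : ℕ} (q : Matrix (Fin n) (Fin n) ℝ)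
    (r : Fin n → ℝ) (i : Fin n) (hnn : ∀ j p, 0 ≤ q j p) (hii : q i i < 1) :
    ((∀ j, ∑ p, q j p ≤ 1) →
      (∀ j p, 0 ≤ pivotQ q i j p) ∧ (∀ j, ∑ p, pivotQ q i j p ≤ 1)) ∧
    ((∀ j, r j ≤ 0) → ∀ j, pivotR q r i j ≤ 0) ∧
    ((∀ j, 0 ≤ r j) → ∀ j, 0 ≤ pivotR q r i j) := by
  have hd : (0:ℝ) < 1 - q i i := by linarith
  have hsum : ∀ j, ∑ p, q j p = q j i + ∑ p ∈ Finset.univ.erase i, q j p := by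
    intro j
    rw [← Finset.add_sum_erase _ _ (Finset.mem_univ i)]
  refine ⟨fun hss => ⟨?_, ?_⟩, ?_, ?_⟩
  · intro j p
    unfold pivotQ
    split_ifs with h1 h2
    · exact le_refl 0
    · exact div_nonneg (hnn i p) hd.le
    · have h3 := div_nonneg (hnn i p) hd.le
      have := hnn j p
      have := hnn j i
      positivity
  · intro j
    have hrow : ∑ p ∈ Finset.univ.erase i, q i p ≤ 1 - q i i := by
      have := hss i
      rw [hsum i] at this
      linarith
    have hrowdiv : ∑ p ∈ Finset.univ.erase i, q i p / (1 - q i i) ≤ 1 := by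
      rw [← Finset.sum_div, div_le_one hd]
      exact hrow
    have hsplit : ∑ p, pivotQ q i j p = ∑ p ∈ Finset.univ.erase i, pivotQ q i j p := by
      rw [← Finset.add_sum_erase _ _ (Finset.mem_univ i)]
      simp [pivotQ]
    rw [hsplit]
    by_cases hj : j = i
    · calc ∑ p ∈ Finset.univ.erase i, pivotQ q i j p
          = ∑ p ∈ Finset.univ.erase i, q i p / (1 - q i i) := by
            apply Finset.sum_congr rfl
            intro p hp
            simp [pivotQ, Finset.ne_of_mem_erase hp, hj]
        _ ≤ 1 := hrowdiv
    · have heq : ∑ p ∈ Finset.univ.erase i, pivotQ q i j p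
          = (∑ p ∈ Finset.univ.erase i, q j p)
            + q j i * ∑ p ∈ Finset.univ.erase i, q i p / (1 - q i i) := by
        rw [Finset.mul_sum, ← Finset.sum_add_distrib]
        apply Finset.sum_congr rfl
        intro p hp
        simp [pivotQ, Finset.ne_of_mem_erase hp, hj]
      rw [heq]
      have h1 : ∑ p ∈ Finset.univ.erase i, q j p ≤ 1 - q j i := by
        have := hss j
        rw [hsum j] at this
        linarith
      have h2 : q j i * ∑ p ∈ Finset.univ.erase i, q i p / (1 - q i i) ≤ q j i * 1 :=
        mul_le_mul_of_nonneg_left hrowdiv (hnn j i)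
      linarith
  · intro hr j
    unfold pivotR
    have hri : r i / (1 - q i i) ≤ 0 := div_nonpos_of_nonpos_of_nonneg (hr i) hd.le
    split_ifs with h
    · exact hri
    · have := hr j
      nlinarith [hnn j i]
  · intro hr j
    unfold pivotR
    have hri : 0 ≤ r i / (1 - q i i) := div_nonneg (hr i) hd.le
    split_ifs with h
    · exact hri
    · have := hr j
      nlinarith [hnn j i]
end

section
/- Let q be an n×n real matrix with q(i,i) < 1 for an index i, let r ∈ ℝ^n, and let (q̄, r̄) be obtained from (q, r) by the pivot at i. Then for every vector v ∈ ℝ^n, v satisfies (I − q)v = r if and only if v satisfies (I − q̄)v = r̄. -/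
open Matrix

/-! The pivot is one step of Gauss–Jordan elimination on the system `(1 - q) v = r`. With the
rank-one update `E = 1 + (1 - q i i)⁻¹ • (column i of q) ⊗ eᵢ` one has `1 - q̄ = E (1 - q)` and
`r̄ = E r`, and `E` is invertible: by the matrix determinant lemma
`det E = 1 + q i i / (1 - q i i) = (1 - q i i)⁻¹`. -/

section

variable {K ι : Type*} [Field K] [Fintype ι] [DecidableEq ι]

def pivotElim (q : Matrix ι ι K) (i : ι) : Matrix ι ι K :=
  1 + vecMulVec (fun j => q j i / (1 - q i i)) (Pi.single i 1)

variable (q : Matrix ι ι K) (i : ι)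

lemma pivotElim_mul_apply (M : Matrix ι ι K) (j p : ι) :
    (pivotElim q i * M) j p = M j p + q j i / (1 - q i i) * M i p := by
  simp [pivotElim, add_mul, vecMulVec_mul, vecMulVec_apply]

lemma pivotElim_mulVec_apply (w : ι → K) (j : ι) :
    (pivotElim q i *ᵥ w) j = w j + q j i / (1 - q i i) * w i := by
  simp [pivotElim, add_mulVec, vecMulVec_mulVec, mul_comm]

lemma det_pivotElim (hd : 1 - q i i ≠ 0) : (pivotElim q i).det = (1 - q i i)⁻¹ := by
  rw [pivotElim, vecMulVec_eq Unit, det_one_add_replicateCol_mul_replicateRow,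
    single_one_dotProduct]
  field_simp
  ring

lemma pivotElim_mulVec_injective (hd : 1 - q i i ≠ 0) :
    Function.Injective (pivotElim q i *ᵥ ·) :=
  mulVec_injective_of_isUnit <| (isUnit_iff_isUnit_det _).2 <| by
    simpa [det_pivotElim q i hd] using hd

end

section

variable {n : ℕ} (q : Matrix (Fin n) (Fin n) ℝ) (i : Fin n)

lemma one_sub_pivotQ_eq_pivotElim_mul (hd : 1 - q i i ≠ 0) :
    1 - pivotQ q i = pivotElim q i * (1 - q) := by
  ext j p
  rw [pivotElim_mul_apply]
  simp only [Matrix.sub_apply, one_apply, pivotQ]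
  split_ifs <;> subst_vars <;> first | contradiction | (field_simp; ring)

lemma pivotR_eq_pivotElim_mulVec (r : Fin n → ℝ) (hd : 1 - q i i ≠ 0) :
    pivotR q r i = pivotElim q i *ᵥ r := by
  ext j
  rw [pivotElim_mulVec_apply, pivotR]
  split_ifs with hj
  · subst hj
    field_simp
    ring
  · ring

end

/-- the pivot preserves the solution set of the linear system:
`(I − q) v = r` iff `(I − q̄) v = r̄`. -/
theorem pivot_preserves_solutions {n : ℕ} (q : Matrix (Fin n) (Fin n) ℝ)
    (r : Fin n → ℝ) (i : Fin n) (hii : q i i < 1) :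
    ∀ v : Fin n → ℝ, (1 - q) *ᵥ v = r ↔ (1 - pivotQ q i) *ᵥ v = pivotR q r i := by
  intro v
  have hd : 1 - q i i ≠ 0 := (sub_pos.2 hii).ne'
  rw [one_sub_pivotQ_eq_pivotElim_mul q i hd, pivotR_eq_pivotElim_mulVec q i r hd,
    ← mulVec_mulVec]
  exact (pivotElim_mulVec_injective q i hd).eq_iff.symm
end

section
/- Under Hypothesis RN, weak preference is a total preorder on the set of states: it is reflexive, transitive, and for every pair of states i and j, either i is weakly preferable to j or j is weakly preferable to i. -/
open scoped Classical

/-- Category of a state under Hypothesis RN. -/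
noncomputable def catRN {ι : Type*} (r a : ι → ℝ) (i : ι) : ℕ :=
  if a i < 1 then 2 else if 0 ≤ r i then 1 else 3

/-- `i` is weakly preferable to `j`: either `r i + a i * r j > r j + a j * r i`, or
equality holds and the category of `i` is at most the category of `j`. -/
noncomputable def WeaklyPref {ι : Type*} (r a : ι → ℝ) (i j : ι) : Prop :=
  r i + a i * r j > r j + a j * r i ∨
    (r i + a i * r j = r j + a j * r i ∧ catRN r a i ≤ catRN r a j)

/-- Numerical value of a state. -/
noncomputable def valRN {ι : Type*} (r a : ι → ℝ) (i : ι) : EReal :=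
  if a i < 1 then ((r i / (1 - a i) : ℝ) : EReal) else if 0 ≤ r i then ⊤ else ⊥

lemma weaklyPref_iff_val {ι : Type*} (r a : ι → ℝ)
    (hRN : ∀ j, 0 ≤ a j ∧ a j ≤ 1) (i j : ι) :
    WeaklyPref r a i j ↔ valRN r a j ≤ valRN r a i := by
  unfold WeaklyPref valRN catRN
  by_cases hi : a i < 1 <;> by_cases hj : a j < 1
  · have hi' : 0 < 1 - a i := by linarith
    have hj' : 0 < 1 - a j := by linarith
    simp only [if_pos hi, if_pos hj, EReal.coe_le_coe_iff]
    rw [div_le_div_iff₀ hj' hi']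
    constructor
    · rintro (h | ⟨h, _⟩) <;> nlinarith
    · intro h
      rcases h.lt_or_eq with h | h
      · left; nlinarith
      · right; exact ⟨by nlinarith, le_rfl⟩
  · have hj1 : a j = 1 := le_antisymm (hRN j).2 (not_lt.mp hj)
    have hi' : 0 < 1 - a i := by linarith
    simp only [if_pos hi, if_neg hj, hj1, one_mul, if_neg (lt_irrefl (1:ℝ))]
    by_cases hrj : 0 ≤ r j
    · simp only [if_pos hrj]
      constructor
      · rintro (h | ⟨h, hc⟩)
        · exfalso; nlinarith
        · exact absurd hc (by norm_num)
      · intro h; exact absurd (top_le_iff.mp h) (EReal.coe_ne_top _)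
    · have hrj' : r j < 0 := not_le.mp hrj
      simp only [if_neg hrj]
      refine iff_of_true ?_ bot_le
      left; nlinarith
  · have hi1 : a i = 1 := le_antisymm (hRN i).2 (not_lt.mp hi)
    have hj' : 0 < 1 - a j := by linarith
    simp only [if_neg hi, if_pos hj, hi1, one_mul, if_neg (lt_irrefl (1:ℝ))]
    by_cases hri : 0 ≤ r i
    · simp only [if_pos hri]
      refine iff_of_true ?_ le_top
      rcases hri.lt_or_eq with h | h
      · left; nlinarith
      · right; exact ⟨by nlinarith, by norm_num⟩
    · have hri' : r i < 0 := not_le.mp hri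
      simp only [if_neg hri]
      constructor
      · rintro (h | ⟨h, hc⟩)
        · exfalso; nlinarith
        · exact absurd hc (by norm_num)
      · intro h; exact absurd (le_bot_iff.mp h) (EReal.coe_ne_bot _)
  · have hi1 : a i = 1 := le_antisymm (hRN i).2 (not_lt.mp hi)
    have hj1 : a j = 1 := le_antisymm (hRN j).2 (not_lt.mp hj)
    simp only [if_neg hi, if_neg hj, hi1, hj1, one_mul, if_neg (lt_irrefl (1:ℝ))]
    have heq : r i + r j = r j + r i := by ring
    have hne : ¬ (r i + r j > r j + r i) := by rw [heq]; exact lt_irrefl _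
    simp only [hne, false_or, heq, true_and]
    by_cases hri : 0 ≤ r i <;> by_cases hrj : 0 ≤ r j <;>
      simp [hri, hrj] <;> omega

/-- under Hypothesis RN, weak preference is reflexive, transitive, and total,
i.e. a total preorder on the set of states. -/
theorem weakPref_total_preorder_RN {ι : Type*} [Fintype ι] (r a : ι → ℝ)
    (hRN : ∀ j, 0 ≤ a j ∧ a j ≤ 1) :
    (∀ i, WeaklyPref r a i i) ∧
    (∀ i j k, WeaklyPref r a i j → WeaklyPref r a j k → WeaklyPref r a i k) ∧
    (∀ i j, WeaklyPref r a i j ∨ WeaklyPref r a j i) := by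
  refine ⟨fun i => ?_, fun i j k hij hjk => ?_, fun i j => ?_⟩
  · exact (weaklyPref_iff_val r a hRN i i).mpr le_rfl
  · rw [weaklyPref_iff_val r a hRN] at *
    exact le_trans hjk hij
  · rw [weaklyPref_iff_val r a hRN, weaklyPref_iff_val r a hRN]
    exact le_total _ _
end

section
/- Consider a multi-armed bandit satisfying Hypothesis RN (each q^k nonnegative, transient and substochastic). Suppose state i ∈ N is weakly preferable to every other state in N, and let k = b(i) be its bandit. Then it is optimal to play bandit k at every multi-state that includes state i: there exists a stationary nonrandomized policy δ with V^δ(s) = F(s) for every multi-state s, and δ(s) = k for every multi-state s with s_k = i. -/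
/-
Among the policies that play bandit `k0` whenever bandit `k0` is in state `i0`, take one
maximizing the total value; by policy improvement, no admissible one-step deviation improves on
its value `V`. The remaining deviations play some bandit `l ≠ k0` at a multi-state `s` with
`s k0 = i0`. Playing `l` and then `k0` reaches the same multi-states with the same probabilities
as playing `k0` and then `l`, and the preference for `i0` says that the first order collects no
more reward. Since bandit `k0` stays in `i0` with probability `q k0 i0 i0 < 1`, this interchange
shows that playing `l` does not improve on `V` either. So `V` dominates its one-step lookahead
everywhere, hence the value of every policy.
-/

open Matrix Filter

open scoped Classical

section Bandit

variable {K : ℕ} {N : Fin K → Type*}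

/-- Transition-rate matrix on multi-states induced by the stationary nonrandomized policy
`δ`: `Q^δ(s,t) = q^{δ(s)}(s_{δ(s)}, t_{δ(s)})` if `t_j = s_j` for all `j ≠ δ(s)`, else `0`. -/
noncomputable def Qpol [∀ k, Fintype (N k)] [∀ k, DecidableEq (N k)]
    (q : ∀ k, Matrix (N k) (N k) ℝ) (δ : (∀ k, N k) → Fin K) :
    Matrix (∀ k, N k) (∀ k, N k) ℝ :=
  fun s t => if (∀ j, j ≠ δ s → t j = s j) then q (δ s) (s (δ s)) (t (δ s)) else 0

/-- Reward vector of policy `δ`: `R^δ(s) = r(s_{δ(s)})`. -/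
def Rpol (r : ∀ k, N k → ℝ) (δ : (∀ k, N k) → Fin K) : (∀ k, N k) → ℝ :=
  fun s => r (δ s) (s (δ s))

/-- Expected utility vector of policy `δ`: `V^δ = (I − Q^δ)⁻¹ R^δ`. -/
noncomputable def Vpol [∀ k, Fintype (N k)] [∀ k, DecidableEq (N k)]
    (q : ∀ k, Matrix (N k) (N k) ℝ) (r : ∀ k, N k → ℝ) (δ : (∀ k, N k) → Fin K) :
    (∀ k, N k) → ℝ :=
  (1 - Qpol q δ)⁻¹ *ᵥ Rpol r δ

/-- Amplification of the state `x.2` of bandit `x.1`. -/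
noncomputable def amplS [∀ k, Fintype (N k)] (q : ∀ k, Matrix (N k) (N k) ℝ)
    (x : Σ k, N k) : ℝ := ∑ j, q x.1 x.2 j

/-- Category of a state under Hypothesis RN. -/
noncomputable def catS [∀ k, Fintype (N k)] (q : ∀ k, Matrix (N k) (N k) ℝ)
    (r : ∀ k, N k → ℝ) (x : Σ k, N k) : ℕ :=
  if amplS q x < 1 then 2 else if 0 ≤ r x.1 x.2 then 1 else 3

/-- State `x` is weakly preferable to state `y`. -/
noncomputable def WeaklyPrefS [∀ k, Fintype (N k)] (q : ∀ k, Matrix (N k) (N k) ℝ)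
    (r : ∀ k, N k → ℝ) (x y : Σ k, N k) : Prop :=
  r x.1 x.2 + amplS q x * r y.1 y.2 > r y.1 y.2 + amplS q y * r x.1 x.2 ∨
    (r x.1 x.2 + amplS q x * r y.1 y.2 = r y.1 y.2 + amplS q y * r x.1 x.2 ∧
      catS q r x ≤ catS q r y)

end Bandit

open Function Topology

namespace Matrix

variable {S : Type*} [Fintype S] {M : Matrix S S ℝ}

lemma mulVec_le_mulVec_of_nonneg (h0 : ∀ i j, 0 ≤ M i j) {v w : S → ℝ}
    (hvw : ∀ i, v i ≤ w i) (i : S) : (M *ᵥ v) i ≤ (M *ᵥ w) i :=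
  Finset.sum_le_sum fun j _ => mul_le_mul_of_nonneg_left (hvw j) (h0 i j)

lemma mulVec_apply_nonneg (h0 : ∀ i j, 0 ≤ M i j) {v : S → ℝ}
    (hv : ∀ i, 0 ≤ v i) (i : S) : 0 ≤ (M *ᵥ v) i :=
  Finset.sum_nonneg fun j _ => mul_nonneg (h0 i j) (hv j)

variable [DecidableEq S]

def IsTransient (M : Matrix S S ℝ) : Prop :=
  ∀ i j, Tendsto (fun t : ℕ => (M ^ t) i j) atTop (𝓝 0)

namespace IsTransient

lemma tendsto_pow_mulVec (hM : M.IsTransient) (v : S → ℝ) (i : S) :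
    Tendsto (fun t : ℕ => (M ^ t *ᵥ v) i) atTop (𝓝 0) := by
  simpa [mulVec, dotProduct] using tendsto_finsetSum Finset.univ fun j _ =>
    (hM i j).mul_const (v j)

lemma isUnit_det_one_sub (hM : M.IsTransient) : IsUnit (1 - M).det := by
  rw [isUnit_iff_ne_zero]
  intro hdet
  obtain ⟨v, hv0, hv⟩ := exists_mulVec_eq_zero_iff.2 hdet
  have hMv : M *ᵥ v = v := by rwa [sub_mulVec, one_mulVec, sub_eq_zero, eq_comm] at hv
  have hpow (t : ℕ) : M ^ t *ᵥ v = v := by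
    induction t with
    | zero => simp
    | succ t ih => rw [pow_succ', ← mulVec_mulVec, ih, hMv]
  refine hv0 (funext fun i => ?_)
  have h := hM.tendsto_pow_mulVec v i
  simp only [hpow] at h
  exact tendsto_nhds_unique tendsto_const_nhds h

lemma nonneg_of_mulVec_le (h0 : ∀ i j, 0 ≤ M i j) (hM : M.IsTransient) {v : S → ℝ}
    (hv : ∀ i, (M *ᵥ v) i ≤ v i) (i : S) : 0 ≤ v i := by
  have hpow (t : ℕ) : ∀ i, (M ^ t *ᵥ v) i ≤ v i := by
    induction t with
    | zero => simp
    | succ t ih =>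
      intro i
      rw [pow_succ, ← mulVec_mulVec]
      exact (mulVec_le_mulVec_of_nonneg (pow_apply_nonneg h0 t) hv i).trans (ih i)
  exact le_of_tendsto (hM.tendsto_pow_mulVec v i) (Eventually.of_forall fun t => hpow t i)

lemma diag_lt_one (h0 : ∀ i j, 0 ≤ M i j) (hM : M.IsTransient) (i : S) : M i i < 1 := by
  have hpow (t : ℕ) : M i i ^ t ≤ (M ^ t) i i := by
    induction t with
    | zero => simp
    | succ t ih =>
      rw [pow_succ, pow_succ, mul_apply]
      calc M i i ^ t * M i i ≤ (M ^ t) i i * M i i := by gcongr; exact h0 i i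
        _ ≤ ∑ j, (M ^ t) i j * M j i :=
          Finset.single_le_sum (f := fun j => (M ^ t) i j * M j i)
            (fun j _ => mul_nonneg (pow_apply_nonneg h0 t i j) (h0 j i)) (Finset.mem_univ i)
  by_contra! h
  have := ge_of_tendsto (hM i i) (Eventually.of_forall fun t => (one_le_pow₀ h).trans (hpow t))
  linarith

end IsTransient

/-- `W` bounds the partial sums of `∑ t, M ^ t *ᵥ 1`, so the powers of `M` are summable. -/
lemma isTransient_of_mulVec_add_one_le (h0 : ∀ i j, 0 ≤ M i j) {W : S → ℝ}
    (hW0 : ∀ i, 0 ≤ W i) (hW : ∀ i, (M *ᵥ W) i + 1 ≤ W i) : M.IsTransient := by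
  have hsum (n : ℕ) : ∀ i, ∑ t ∈ Finset.range n, (M ^ t *ᵥ 1) i + (M ^ n *ᵥ W) i ≤ W i := by
    induction n with
    | zero => simp
    | succ n ih =>
      intro i
      have hstep : (M ^ (n + 1) *ᵥ W) i + (M ^ n *ᵥ 1) i ≤ (M ^ n *ᵥ W) i := by
        rw [pow_succ, ← mulVec_mulVec, ← Pi.add_apply, ← mulVec_add]
        exact mulVec_le_mulVec_of_nonneg (pow_apply_nonneg h0 n) (fun j => hW j) i
      rw [Finset.sum_range_succ]
      linarith [ih i]
  intro i j
  have hnn (t : ℕ) : 0 ≤ (M ^ t *ᵥ 1) i :=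
    mulVec_apply_nonneg (pow_apply_nonneg h0 t) (fun _ => zero_le_one) i
  have hsummable : Summable fun t => (M ^ t *ᵥ 1) i :=
    summable_of_sum_range_le hnn fun n => by
      linarith [hsum n i, mulVec_apply_nonneg (pow_apply_nonneg h0 n) hW0 i]
  refine squeeze_zero (fun t => pow_apply_nonneg h0 t i j) (fun t => ?_)
    hsummable.tendsto_atTop_zero
  simpa [mulVec, dotProduct] using Finset.single_le_sum
    (fun l _ => pow_apply_nonneg h0 t i l) (Finset.mem_univ j)

end Matrix

section Lookahead

variable {K : ℕ} {N : Fin K → Type*} [∀ k, Fintype (N k)]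
  (q : ∀ k, Matrix (N k) (N k) ℝ) (r : ∀ k, N k → ℝ)

def lookahead (V : (∀ k, N k) → ℝ) (s : ∀ k, N k) (k : Fin K) : ℝ :=
  r k (s k) + ∑ j, q k (s k) j * V (update s k j)

variable {q r}

/-- Playing two different bandits in either order leads to the same multi-states with the same
probabilities; only the collected rewards differ. -/
lemma lookahead_lookahead_comm (V : (∀ k, N k) → ℝ) (s : ∀ k, N k) {k l : Fin K} (hkl : k ≠ l) :
    lookahead q r (fun t => lookahead q r V t k) s l
        - (r l (s l) + amplS q ⟨l, s l⟩ * r k (s k)) =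
      lookahead q r (fun t => lookahead q r V t l) s k
        - (r k (s k) + amplS q ⟨k, s k⟩ * r l (s l)) := by
  simp only [lookahead, amplS, update_of_ne hkl, update_of_ne hkl.symm,
    mul_add, Finset.sum_add_distrib, Finset.sum_mul, Finset.mul_sum]
  rw [Finset.sum_comm (f := fun x y => q l (s l) x * (q k (s k) y * _))]
  simp only [update_comm hkl, mul_left_comm (q l (s l) _)]
  ring

lemma WeaklyPrefS.le {x y : Σ k, N k} (h : WeaklyPrefS q r x y) :
    r y.1 y.2 + amplS q y * r x.1 x.2 ≤ r x.1 x.2 + amplS q x * r y.1 y.2 := by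
  rcases h with h | ⟨h, -⟩
  exacts [h.le, h.ge]

/-- The interchange argument: exchanging the order in which `k` and `l` are played shows that the
gain `L - V s` of playing `l` at `s` is at most `q k (s k) (s k) < 1` times itself. -/
lemma lookahead_le_of_interchange (hnn : ∀ k i j, 0 ≤ q k i j) {V : (∀ k, N k) → ℝ}
    {s : ∀ k, N k} {k l : Fin K} (hkl : k ≠ l) (hc : q k (s k) (s k) < 1)
    (hpref : r l (s l) + amplS q ⟨l, s l⟩ * r k (s k) ≤ r k (s k) + amplS q ⟨k, s k⟩ * r l (s l))
    (hV : ∀ t, t k = s k → V t = lookahead q r V t k)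
    (hoff : ∀ t, t k ≠ s k → lookahead q r V t l ≤ V t) :
    lookahead q r V s l ≤ V s := by
  set L := lookahead q r V s l
  have hL : L = lookahead q r (fun t => lookahead q r V t k) s l := by
    refine congrArg (r l (s l) + ·) (Finset.sum_congr rfl fun j _ => ?_)
    rw [hV _ (update_of_ne hkl _ _)]
  have hdiff : ∑ j, q k (s k) j * (lookahead q r V (update s k j) l - V (update s k j))
      ≤ q k (s k) (s k) * (L - V s) := by
    calc _ ≤ ∑ j, if j = s k then q k (s k) (s k) * (L - V s) else 0 :=
          Finset.sum_le_sum fun j _ => by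
            split_ifs with hj
            · subst hj; simp only [update_eq_self, le_refl, L]
            · exact mul_nonpos_of_nonneg_of_nonpos (hnn _ _ _)
                (sub_nonpos.2 (hoff _ (by simpa using hj)))
      _ = _ := Fintype.sum_ite_eq' _ _
  have hcomm := lookahead_lookahead_comm (q := q) (r := r) V s hkl
  have hstep : L - V s ≤ q k (s k) (s k) * (L - V s) := by
    calc L - V s ≤ lookahead q r (fun t => lookahead q r V t l) s k - lookahead q r V s k := by
          linarith [hV s rfl]
      _ = ∑ j, q k (s k) j * (lookahead q r V (update s k j) l - V (update s k j)) := by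
          simp only [lookahead, mul_sub, Finset.sum_sub_distrib]; ring
      _ ≤ _ := hdiff
  nlinarith

end Lookahead

section Policy

variable {K : ℕ} {N : Fin K → Type*} [∀ k, Fintype (N k)] [∀ k, DecidableEq (N k)]
  {q : ∀ k, Matrix (N k) (N k) ℝ} {r : ∀ k, N k → ℝ}

lemma Qpol_mulVec_apply (δ : (∀ k, N k) → Fin K) (f : (∀ k, N k) → ℝ) (s : ∀ k, N k) :
    (Qpol q δ *ᵥ f) s = ∑ j, q (δ s) (s (δ s)) j * f (update s (δ s) j) := by
  have hfiber (t : ∀ k, N k) : (if ∀ j, j ≠ δ s → t j = s j then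
        q (δ s) (s (δ s)) (t (δ s)) * f t else 0) =
      ∑ j, if t = update s (δ s) j then q (δ s) (s (δ s)) (t (δ s)) * f t else 0 := by
    simp only [eq_update_iff, ite_and, Finset.sum_ite_eq, Finset.mem_univ, if_true]
  simp only [mulVec, dotProduct, Qpol, ite_mul, zero_mul, hfiber]
  rw [Finset.sum_comm]
  simp only [Fintype.sum_ite_eq', update_self]

lemma Qpol_apply_nonneg (hnn : ∀ k i j, 0 ≤ q k i j) (δ : (∀ k, N k) → Fin K)
    (s t : ∀ k, N k) : 0 ≤ Qpol q δ s t := by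
  unfold Qpol
  split_ifs
  exacts [hnn _ _ _, le_rfl]

/-- `u k = (1 - q k)⁻¹ *ᵥ 1` counts the expected plays of bandit `k`; under any policy their sum
over the bandits drops by at least one per step. -/
lemma isTransient_Qpol (hnn : ∀ k i j, 0 ≤ q k i j) (hsub : ∀ k i, ∑ j, q k i j ≤ 1)
    (htr : ∀ k, (q k).IsTransient) (δ : (∀ k, N k) → Fin K) : (Qpol q δ).IsTransient := by
  set u : ∀ k, N k → ℝ := fun k => (1 - q k)⁻¹ *ᵥ 1
  have hu (k : Fin K) (i : N k) : (q k *ᵥ u k) i + 1 = u k i := by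
    have h := congrFun (show (1 - q k) *ᵥ u k = 1 by
      rw [mulVec_mulVec, mul_nonsing_inv _ (htr k).isUnit_det_one_sub, one_mulVec]) i
    simp only [sub_mulVec, one_mulVec, Pi.sub_apply, Pi.one_apply] at h
    linarith
  have hu0 (k : Fin K) (i : N k) : 0 ≤ u k i :=
    (htr k).nonneg_of_mulVec_le (hnn k) (fun i => by linarith [hu k i]) i
  set W : (∀ k, N k) → ℝ := fun s => ∑ k, u k (s k)
  have hW0 (s : ∀ k, N k) : 0 ≤ W s := Finset.sum_nonneg fun k _ => hu0 k (s k)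
  have hWu (s : ∀ k, N k) (k : Fin K) : u k (s k) ≤ W s :=
    Finset.single_le_sum (f := fun k => u k (s k)) (fun k _ => hu0 k (s k)) (Finset.mem_univ k)
  have hWupdate (s : ∀ k, N k) (k : Fin K) (j : N k) :
      W (update s k j) = W s - u k (s k) + u k j := by
    have h : W (update s k j) - W s = u k j - u k (s k) := by
      rw [← Finset.sum_sub_distrib, Finset.sum_eq_single k]
      · simp
      · intro k' _ hk'
        simp [update_of_ne hk']
      · simp
    linarith
  refine isTransient_of_mulVec_add_one_le (Qpol_apply_nonneg hnn δ) hW0 fun s => ?_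
  set k := δ s
  have hQW : (Qpol q δ *ᵥ W) s
      = (∑ j, q k (s k) j) * (W s - u k (s k)) + (q k *ᵥ u k) (s k) := by
    simp only [Qpol_mulVec_apply, hWupdate, mul_add, Finset.sum_add_distrib, Finset.sum_mul]
    rfl
  have hamp : (∑ j, q k (s k) j) * (W s - u k (s k)) ≤ W s - u k (s k) :=
    mul_le_of_le_one_left (sub_nonneg.2 (hWu s k)) (hsub k (s k))
  linarith [hu k (s k)]

lemma lookahead_eq_Rpol_add_Qpol_mulVec (V : (∀ k, N k) → ℝ) (δ : (∀ k, N k) → Fin K)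
    (s : ∀ k, N k) : lookahead q r V s (δ s) = Rpol r δ s + (Qpol q δ *ᵥ V) s := by
  rw [Qpol_mulVec_apply]
  rfl

variable (hnn : ∀ k i j, 0 ≤ q k i j) (hsub : ∀ k i, ∑ j, q k i j ≤ 1)
  (htr : ∀ k, (q k).IsTransient)
include hnn hsub htr

variable (r) in
lemma Vpol_eq_lookahead (δ : (∀ k, N k) → Fin K) (s : ∀ k, N k) :
    Vpol q r δ s = lookahead q r (Vpol q r δ) s (δ s) := by
  have h : (1 - Qpol q δ) *ᵥ Vpol q r δ = Rpol r δ := by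
    rw [Vpol, mulVec_mulVec,
      mul_nonsing_inv _ (isTransient_Qpol hnn hsub htr δ).isUnit_det_one_sub, one_mulVec]
  have hs := congrFun h s
  simp only [sub_mulVec, one_mulVec, Pi.sub_apply] at hs
  rw [lookahead_eq_Rpol_add_Qpol_mulVec]
  linarith

variable (r) in
lemma Vpol_sub_eq (δ : (∀ k, N k) → Fin K) (V : (∀ k, N k) → ℝ) (s : ∀ k, N k) :
    Vpol q r δ s - V s =
      (Qpol q δ *ᵥ (Vpol q r δ - V)) s + (lookahead q r V s (δ s) - V s) := by
  have h := Vpol_eq_lookahead r hnn hsub htr δ s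
  rw [lookahead_eq_Rpol_add_Qpol_mulVec] at h ⊢
  rw [mulVec_sub, Pi.sub_apply]
  linarith

lemma Vpol_le_of_lookahead_le {δ : (∀ k, N k) → Fin K} {V : (∀ k, N k) → ℝ}
    (hV : ∀ s, lookahead q r V s (δ s) ≤ V s) (s : ∀ k, N k) : Vpol q r δ s ≤ V s := by
  have h := (isTransient_Qpol hnn hsub htr δ).nonneg_of_mulVec_le (Qpol_apply_nonneg hnn δ)
    (v := V - Vpol q r δ) (fun t => ?_) s
  · simpa using h
  rw [← neg_sub, mulVec_neg, Pi.neg_apply, Pi.neg_apply, Pi.sub_apply]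
  linarith [Vpol_sub_eq r hnn hsub htr δ V t, hV t]

lemma le_Vpol_of_le_lookahead {δ : (∀ k, N k) → Fin K} {V : (∀ k, N k) → ℝ}
    (hV : ∀ s, V s ≤ lookahead q r V s (δ s)) (s : ∀ k, N k) : V s ≤ Vpol q r δ s := by
  have h := (isTransient_Qpol hnn hsub htr δ).nonneg_of_mulVec_le (Qpol_apply_nonneg hnn δ)
    (v := Vpol q r δ - V) (fun t => ?_) s
  · simpa using h
  rw [Pi.sub_apply]
  linarith [Vpol_sub_eq r hnn hsub htr δ V t, hV t]

lemma lt_Vpol_of_lt_lookahead {δ : (∀ k, N k) → Fin K} {V : (∀ k, N k) → ℝ}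
    (hV : ∀ s, V s ≤ lookahead q r V s (δ s)) {s : ∀ k, N k}
    (hs : V s < lookahead q r V s (δ s)) : V s < Vpol q r δ s := by
  have hQ := mulVec_apply_nonneg (Qpol_apply_nonneg hnn δ) (v := Vpol q r δ - V)
    (fun t => sub_nonneg.2 (le_Vpol_of_le_lookahead hnn hsub htr hV t)) s
  linarith [Vpol_sub_eq r hnn hsub htr δ V s]

/-- A policy maximizing `∑ s, Vpol q r δ s` among those taking only admissible actions admits no
improving admissible one-step deviation. -/
lemma exists_admissible_forall_lookahead_le (A : (∀ k, N k) → Fin K → Prop)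
    {δ₀ : (∀ k, N k) → Fin K} (hδ₀ : ∀ s, A s (δ₀ s)) :
    ∃ δ : (∀ k, N k) → Fin K, (∀ s, A s (δ s)) ∧
      ∀ s k, A s k → lookahead q r (Vpol q r δ) s k ≤ Vpol q r δ s := by
  obtain ⟨δ, hδA, hmax⟩ := Finset.exists_max_image (Finset.univ.filter fun δ => ∀ s, A s (δ s))
    (fun δ => ∑ s, Vpol q r δ s) ⟨δ₀, by simpa using hδ₀⟩
  simp only [Finset.mem_filter, Finset.mem_univ, true_and] at hδA hmax
  refine ⟨δ, hδA, fun s k hk => not_lt.1 fun hlt => ?_⟩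
  set δ' := update δ s k
  have hδ'A (t : ∀ k, N k) : A t (δ' t) := by
    rcases eq_or_ne t s with rfl | ht
    · simpa [δ'] using hk
    · simpa [δ', update_of_ne ht] using hδA t
  have hle (t : ∀ k, N k) : Vpol q r δ t ≤ lookahead q r (Vpol q r δ) t (δ' t) := by
    rcases eq_or_ne t s with rfl | ht
    · simpa [δ'] using hlt.le
    · rw [show δ' t = δ t from update_of_ne ht _ _]
      exact (Vpol_eq_lookahead r hnn hsub htr δ t).le
  have hsum : ∑ t, Vpol q r δ t < ∑ t, Vpol q r δ' t :=
    Finset.sum_lt_sum (fun t _ => le_Vpol_of_le_lookahead hnn hsub htr hle t)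
      ⟨s, Finset.mem_univ s, lt_Vpol_of_lt_lookahead hnn hsub htr hle (by simpa [δ'] using hlt)⟩
  linarith [hmax δ' hδ'A]

end Policy

theorem optimal_to_play_weakly_preferred_general {K : ℕ} (N : Fin K → Type*)
    [∀ k, Fintype (N k)] [∀ k, DecidableEq (N k)]
    (q : ∀ k, Matrix (N k) (N k) ℝ) (r : ∀ k, N k → ℝ)
    (hnn : ∀ k i j, 0 ≤ q k i j)
    (hsub : ∀ k i, ∑ j, q k i j ≤ 1)
    (htr : ∀ k i j, Tendsto (fun t : ℕ => ((q k) ^ t) i j) atTop (nhds 0))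
    (k0 : Fin K) (i0 : N k0)
    (hpref : ∀ x : Σ k, N k, x ≠ ⟨k0, i0⟩ → WeaklyPrefS q r ⟨k0, i0⟩ x) :
    ∃ δ : (∀ k, N k) → Fin K,
      (∀ s, Vpol q r δ s = ⨆ δ' : (∀ k, N k) → Fin K, Vpol q r δ' s) ∧
      (∀ s : ∀ k, N k, s k0 = i0 → δ s = k0) := by
  obtain ⟨δ, hδ, hδopt⟩ := exists_admissible_forall_lookahead_le hnn hsub htr
    (fun s k => s k0 = i0 → k = k0) (δ₀ := fun _ => k0) fun _ _ => rfl
  have hV (s : ∀ k, N k) (k : Fin K) : lookahead q r (Vpol q r δ) s k ≤ Vpol q r δ s := by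
    by_cases hadm : s k0 = i0 → k = k0
    · exact hδopt s k hadm
    obtain ⟨rfl, hk⟩ := Classical.not_imp.1 hadm
    exact lookahead_le_of_interchange hnn (Ne.symm hk)
      (Matrix.IsTransient.diag_lt_one (hnn k0) (htr k0) _)
      (hpref ⟨k, s k⟩ fun h => hk (congrArg Sigma.fst h)).le
      (fun t ht => (Vpol_eq_lookahead r hnn hsub htr δ t).trans (by rw [hδ t ht]))
      (fun t ht => hδopt t k fun h => absurd h ht)
  have : Nonempty ((∀ k, N k) → Fin K) := ⟨fun _ => k0⟩
  refine ⟨δ, fun s => le_antisymm ?_ ?_, hδ⟩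
  · exact le_ciSup (Set.finite_range fun δ' => Vpol q r δ' s).bddAbove δ
  · exact ciSup_le fun δ' => Vpol_le_of_lookahead_le hnn hsub htr (fun t => hV t (δ' t)) s

/-- under Hypothesis RN, if state `i0` of bandit `k0` is weakly preferable to
every other state, then there is an optimal stationary nonrandomized policy that plays
bandit `k0` at every multi-state containing `i0`. -/
theorem optimal_to_play_weakly_preferred {K : ℕ} (N : Fin K → Type*)
    [∀ k, Fintype (N k)] [∀ k, DecidableEq (N k)] [∀ k, Nonempty (N k)]
    (q : ∀ k, Matrix (N k) (N k) ℝ) (r : ∀ k, N k → ℝ)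
    (hnn : ∀ k i j, 0 ≤ q k i j)
    (hsub : ∀ k i, ∑ j, q k i j ≤ 1)
    (htr : ∀ k i j, Tendsto (fun t : ℕ => ((q k) ^ t) i j) atTop (nhds 0))
    (k0 : Fin K) (i0 : N k0)
    (hpref : ∀ x : Σ k, N k, x ≠ ⟨k0, i0⟩ → WeaklyPrefS q r ⟨k0, i0⟩ x) :
    ∃ δ : (∀ k, N k) → Fin K,
      (∀ s, Vpol q r δ s = ⨆ δ' : (∀ k, N k) → Fin K, Vpol q r δ' s) ∧
      (∀ s : ∀ k, N k, s k0 = i0 → δ s = k0) :=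
  optimal_to_play_weakly_preferred_general N q r hnn hsub htr k0 i0 hpref
end
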